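/- For a hereditarily unicoherent continuum X, the following are equivalent: (1) X has exactly one meager composant; (2) every two points of X lie in a common nowhere dense subcontinuum; (3) every subcontinuum of X that is irreducible between two of its points is nowhere dense in X. -/

import Mathlib

open Set Topology

/-- The meager composant of `x`: the union of all nowhere dense subcontinua containing `x`. -/
def MeagerComposant (X : Type) [TopologicalSpace X] (x : X) : Set X :=
  ⋃₀ {L : Set X | IsCompact L ∧ IsConnected L ∧ IsNowhereDense L ∧ x ∈ L}

/-- A continuum is hereditarily unicoherent if the intersection of any two subcontinua
is connected (possibly empty, hence preconnected). -/
def HereditarilyUnicoherent (X : Type) [TopologicalSpace X] : Prop :=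
  ∀ A B : Set X, IsCompact A → IsConnected A → IsCompact B → IsConnected B →
    IsPreconnected (A ∩ B)

/-- A subcontinuum `A` of `X` is ample if every open neighborhood of `A` contains a
subcontinuum having `A` in its interior. -/
def Ample {X : Type} [TopologicalSpace X] (A : Set X) : Prop :=
  ∀ U : Set X, IsOpen U → A ⊆ U →
    ∃ K : Set X, IsCompact K ∧ IsPreconnected K ∧ A ⊆ interior K ∧ K ⊆ U

/-- A set `C` is indecomposable if it is not the union of two proper subcontinua. -/
def IndecomposableSet {X : Type} [TopologicalSpace X] (C : Set X) : Prop :=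
  ¬ ∃ H K : Set X, IsCompact H ∧ IsConnected H ∧ IsCompact K ∧ IsConnected K ∧
    H ⊆ C ∧ K ⊆ C ∧ H ≠ C ∧ K ≠ C ∧ H ∪ K = C

/-! The two structural inputs are the existence of irreducible subcontinua (Zorn's lemma, using
that a nested intersection of continua is a continuum) and the fact that, in a hereditarily
unicoherent continuum, a subcontinuum irreducible between `a` and `b` lies inside every
subcontinuum containing `a` and `b`. Hence (2) makes irreducible continua nowhere dense, and
conversely an irreducible continuum between `x` and `y` is a nowhere dense continuum through
both. Condition (2) says that every point lies in every meager composant, and since meager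
composants are the classes of an equivalence relation this is the same as there being only one. -/

section Continua

variable {X : Type*} [TopologicalSpace X]

theorem IsNowhereDense.union {s t : Set X} (hs : IsNowhereDense s) (ht : IsNowhereDense t) :
    IsNowhereDense (s ∪ t) := by
  rw [IsNowhereDense, closure_union, interior_union_isClosed_of_interior_empty isClosed_closure ht,
    hs]

theorem DirectedOn.isConnected_sInter [T2Space X] {c : Set (Set X)} (hc : DirectedOn (· ⊇ ·) c)
    (hne : c.Nonempty) (hcpt : ∀ K ∈ c, IsCompact K) (hconn : ∀ K ∈ c, IsConnected K) :
    IsConnected (⋂₀ c) := by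
  have := hne.to_subtype
  have hcl : ∀ K ∈ c, IsClosed K := fun K hK => (hcpt K hK).isClosed
  obtain ⟨K₀, hK₀⟩ := hne
  have hIcpt : IsCompact (⋂₀ c) :=
    (hcpt K₀ hK₀).of_isClosed_subset (isClosed_sInter hcl) (sInter_subset_of_mem hK₀)
  refine ⟨IsCompact.nonempty_sInter_of_directed_nonempty_isCompact_isClosed hc
    (fun K hK => (hconn K hK).nonempty) hcpt hcl, ?_⟩
  rw [isPreconnected_iff_subset_of_fully_disjoint_closed (isClosed_sInter hcl)]
  intro u v hu hv huv hdisj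
  obtain ⟨U, V, hU, hV, huU, hvV, hUV⟩ := SeparatedNhds.of_isCompact_isCompact
    (hIcpt.inter_right hu) (hIcpt.inter_right hv)
    (hdisj.mono inter_subset_right inter_subset_right)
  -- By compactness a single member `K` of the family lies in `U ∪ V`; it is connected, so it
  -- picks a side, and then so does `⋂₀ c ⊆ K`.
  have hnhds : ∀ z ∈ ⋂ K : c, (K : Set X), U ∪ V ∈ 𝓝 z := by
    intro z hz
    rw [← sInter_eq_iInter] at hz
    refine (hU.union hV).mem_nhds ?_
    rcases huv hz with hzu | hzv
    exacts [Or.inl (huU ⟨hz, hzu⟩), Or.inr (hvV ⟨hz, hzv⟩)]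
  obtain ⟨⟨K, hK⟩, hKUV⟩ := exists_subset_nhds_of_isCompact hc.directed_val
    (fun K => hcpt K K.2) hnhds
  have hIK : ⋂₀ c ⊆ K := sInter_subset_of_mem hK
  rcases (hconn K hK).isPreconnected.subset_or_subset hU hV hUV hKUV with hKU | hKV
  · refine .inl fun z hz => (huv hz).resolve_right fun hzv => ?_
    exact disjoint_left.mp hUV (hKU (hIK hz)) (hvV ⟨hz, hzv⟩)
  · refine .inr fun z hz => (huv hz).resolve_left fun hzu => ?_
    exact disjoint_left.mp hUV (huU ⟨hz, hzu⟩) (hKV (hIK hz))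

def IsIrreducibleBetween (K : Set X) (a b : X) : Prop :=
  ∀ L : Set X, L ⊆ K → IsCompact L → IsConnected L → a ∈ L → b ∈ L → L = K

theorem exists_isIrreducibleBetween_subset [T2Space X] {K : Set X} (hK : IsCompact K)
    (hKc : IsConnected K) {x y : X} (hx : x ∈ K) (hy : y ∈ K) :
    ∃ L ⊆ K, IsCompact L ∧ IsConnected L ∧ x ∈ L ∧ y ∈ L ∧
      IsIrreducibleBetween L x y := by
  let S : Set (Set X) := {L | IsCompact L ∧ IsConnected L ∧ x ∈ L ∧ y ∈ L}
  have hchain :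
      ∀ c ⊆ S, IsChain (· ⊆ ·) c → c.Nonempty → ∃ lb ∈ S, ∀ L ∈ c, lb ⊆ L := by
    intro c hcS hc hne
    obtain ⟨K₀, hK₀⟩ := hne
    refine ⟨⋂₀ c, ⟨?_, ?_, fun L hL => (hcS hL).2.2.1, fun L hL => (hcS hL).2.2.2⟩,
      fun L hL => sInter_subset_of_mem hL⟩
    · exact (hcS hK₀).1.of_isClosed_subset (isClosed_sInter fun L hL => (hcS hL).1.isClosed)
        (sInter_subset_of_mem hK₀)
    · exact (IsChain.directedOn (r := fun s t : Set X => t ⊆ s) hc.symm).isConnected_sInter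
        ⟨K₀, hK₀⟩ (fun L hL => (hcS hL).1) (fun L hL => (hcS hL).2.1)
  obtain ⟨L, hLK, ⟨hLc, hLconn, hxL, hyL⟩, hmin⟩ :=
    zorn_superset_nonempty S hchain K ⟨hK, hKc, hx, hy⟩
  exact ⟨L, hLK, hLc, hLconn, hxL, hyL, fun M hML hMc hMconn hxM hyM =>
    hML.antisymm (hmin ⟨hMc, hMconn, hxM, hyM⟩ hML)⟩

end Continua

section HereditarilyUnicoherent

variable {X : Type} [TopologicalSpace X] [T2Space X]

theorem HereditarilyUnicoherent.subset_of_isIrreducibleBetween (hX : HereditarilyUnicoherent X)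
    {K L : Set X} {a b : X} (hK : IsCompact K) (hKc : IsConnected K) (ha : a ∈ K) (hb : b ∈ K)
    (hirr : IsIrreducibleBetween K a b) (hL : IsCompact L) (hLc : IsConnected L) (haL : a ∈ L)
    (hbL : b ∈ L) : K ⊆ L := by
  have hKL : K ∩ L = K := hirr (K ∩ L) inter_subset_left (hK.inter_right hL.isClosed)
    ⟨⟨a, ha, haL⟩, hX K L hK hKc hL hLc⟩ ⟨ha, haL⟩ ⟨hb, hbL⟩
  exact inter_eq_left.mp hKL

end HereditarilyUnicoherent

section MeagerComposant

variable {X : Type} [TopologicalSpace X]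

theorem mem_meagerComposant {x y : X} :
    y ∈ MeagerComposant X x ↔
      ∃ L : Set X, IsCompact L ∧ IsConnected L ∧ IsNowhereDense L ∧
        x ∈ L ∧ y ∈ L := by
  simp [MeagerComposant, and_assoc]

theorem mem_meagerComposant_comm {x y : X} :
    y ∈ MeagerComposant X x ↔ x ∈ MeagerComposant X y := by
  simp only [mem_meagerComposant]
  exact exists_congr fun L => by tauto

theorem mem_meagerComposant_self [T1Space X] [ConnectedSpace X] [Nontrivial X] (x : X) :
    x ∈ MeagerComposant X x :=
  mem_meagerComposant.mpr ⟨{x}, isCompact_singleton, isConnected_singleton,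
    isClosed_singleton.isNowhereDense_iff.mpr (interior_singleton x), rfl, rfl⟩

theorem meagerComposant_subset_of_mem {x y : X} (h : x ∈ MeagerComposant X y) :
    MeagerComposant X x ⊆ MeagerComposant X y := by
  intro z hz
  obtain ⟨L, hL, hLc, hLn, hyL, hxL⟩ := mem_meagerComposant.mp h
  obtain ⟨M, hM, hMc, hMn, hxM, hzM⟩ := mem_meagerComposant.mp hz
  exact mem_meagerComposant.mpr ⟨L ∪ M, hL.union hM, hLc.union ⟨x, hxL, hxM⟩ hMc,
    hLn.union hMn, .inl hyL, .inr hzM⟩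

theorem meagerComposant_eq_of_mem {x y : X} (h : x ∈ MeagerComposant X y) :
    MeagerComposant X x = MeagerComposant X y :=
  (meagerComposant_subset_of_mem h).antisymm
    (meagerComposant_subset_of_mem (mem_meagerComposant_comm.mp h))

end MeagerComposant

theorem one_meagerComposant_tfae_general (X : Type) [MetricSpace X] [CompactSpace X] [ConnectedSpace X] [Nontrivial X]
    (hX : HereditarilyUnicoherent X) :
    ((∀ x y : X, MeagerComposant X x = MeagerComposant X y) ↔
      (∀ x y : X, ∃ L : Set X, IsCompact L ∧ IsConnected L ∧ IsNowhereDense L ∧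
        x ∈ L ∧ y ∈ L)) ∧
    ((∀ x y : X, ∃ L : Set X, IsCompact L ∧ IsConnected L ∧ IsNowhereDense L ∧
        x ∈ L ∧ y ∈ L) ↔
      (∀ K : Set X, IsCompact K → IsConnected K →
        (∃ a ∈ K, ∃ b ∈ K, ∀ L : Set X, L ⊆ K → IsCompact L → IsConnected L →
          a ∈ L → b ∈ L → L = K) → IsNowhereDense K)) := by
  simp only [← mem_meagerComposant]
  refine ⟨⟨fun h x y => h x y ▸ mem_meagerComposant_self y,
    fun h x y => meagerComposant_eq_of_mem (h y x)⟩, ⟨?_, ?_⟩⟩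
  · rintro h K hK hKc ⟨a, ha, b, hb, hirr⟩
    obtain ⟨L, hL, hLc, hLn, haL, hbL⟩ := mem_meagerComposant.mp (h a b)
    exact hLn.mono (hX.subset_of_isIrreducibleBetween hK hKc ha hb hirr hL hLc haL hbL)
  · intro h x y
    obtain ⟨L, -, hL, hLc, hxL, hyL, hirr⟩ :=
      exists_isIrreducibleBetween_subset isCompact_univ isConnected_univ (mem_univ x)
        (mem_univ y)
    exact mem_meagerComposant.mpr ⟨L, hL, hLc, h L hL hLc ⟨x, hxL, y, hyL, hirr⟩, hxL, hyL⟩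

/-- For a (nondegenerate) hereditarily unicoherent continuum the following are
equivalent: (1) there is only one meager composant; (2) every two points lie in a common
nowhere dense subcontinuum; (3) every subcontinuum irreducible between two of its points
is nowhere dense. -/
theorem one_meagerComposant_tfae (X : Type) [MetricSpace X] [CompactSpace X] [ConnectedSpace X] [Nonempty X] [Nontrivial X]
    (hX : HereditarilyUnicoherent X) :
    ((∀ x y : X, MeagerComposant X x = MeagerComposant X y) ↔
      (∀ x y : X, ∃ L : Set X, IsCompact L ∧ IsConnected L ∧ IsNowhereDense L ∧
        x ∈ L ∧ y ∈ L)) ∧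
    ((∀ x y : X, ∃ L : Set X, IsCompact L ∧ IsConnected L ∧ IsNowhereDense L ∧
        x ∈ L ∧ y ∈ L) ↔
      (∀ K : Set X, IsCompact K → IsConnected K →
        (∃ a ∈ K, ∃ b ∈ K, ∀ L : Set X, L ⊆ K → IsCompact L → IsConnected L →
          a ∈ L → b ∈ L → L = K) → IsNowhereDense K)) :=
  one_meagerComposant_tfae_general X hX
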